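/- Let d ≥ 1, let S ⊆ ℝ^d be nonempty, let x ∈ ℝ^d and t > 0, and let (e_i)_{i=1}^d be the standard basis of ℝ^d. Suppose that S ∩ B(x,t) ≠ ∅ and that S ∩ B(x + 3√d·t·e_i, t) ≠ ∅ and S ∩ B(x − 3√d·t·e_i, t) ≠ ∅ for every i = 1,…,d, where B(y,s) denotes the open Euclidean ball of radius s around y. Then: (a) every point p ∈ S minimizing the Euclidean distance to x satisfies |p − x| < t; and (b) for every z ∈ ℝ^d with |z − x| > 9d√d·t there exists u ∈ S such that |z − u| < |z − w| for every w ∈ S ∩ B(x,t). In particular, no point z with |z − x| > 9d√d·t can have its nearest point of S inside B(x,t). -/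

import Mathlib

/-!
Part (a) holds because the point of `S ∩ B(x,t)` is itself a competitor. For (b), write
`v = z - x` and pick the basis vector `±e_i` with `|v| ≤ √d ⟪v, ±e_i⟫` (a largest
coordinate of `v`). Moving the centre from `x` to `c = x ± 3√d t e_i` brings it more
than `2t` closer to `z`, so any point of `S ∩ B(c,t)` is closer to `z` than every point
of `S ∩ B(x,t)`.
-/

open Metric
open scoped RealInnerProductSpace

namespace OrthonormalBasis

variable {ι E : Type*} [Fintype ι] [Nonempty ι] [NormedAddCommGroup E] [InnerProductSpace ℝ E]

theorem exists_norm_le_sqrt_card_mul_abs_inner (b : OrthonormalBasis ι ℝ E) (x : E) :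
    ∃ i, ‖x‖ ≤ √(Fintype.card ι) * |⟪b i, x⟫| := by
  obtain ⟨i, hi⟩ := exists_eq_ciSup_of_finite (f := fun j ↦ ‖⟪b j, x⟫‖)
  refine ⟨i, ?_⟩
  rw [← Real.norm_eq_abs, hi]
  exact b.norm_le_card_mul_iSup_norm_inner x

end OrthonormalBasis

theorem norm_sub_smul_lt_of_le_inner {E : Type*} [NormedAddCommGroup E] [InnerProductSpace ℝ E]
    {v e : E} {d t : ℝ} (he : ‖e‖ = 1) (hd : 1 ≤ d) (ht : 0 < t)
    (hve : ‖v‖ ≤ √d * ⟪v, e⟫) (hv : 9 * d * √d * t < ‖v‖) :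
    ‖v - (3 * √d * t) • e‖ < ‖v‖ - 2 * t := by
  have hs : 1 ≤ √d := Real.one_le_sqrt.mpr hd
  have hsd : √d ^ 2 = d := Real.sq_sqrt (by linarith)
  have hv' : 9 * d * t < ‖v‖ := by
    nlinarith [mul_le_mul_of_nonneg_left hs (by positivity : (0 : ℝ) ≤ 9 * d * t)]
  have hsq : ‖v - (3 * √d * t) • e‖ ^ 2 ≤ ‖v‖ ^ 2 - 6 * t * ‖v‖ + 9 * d * t ^ 2 := by
    rw [norm_sub_sq_real, real_inner_smul_right, norm_smul, he,
      Real.norm_of_nonneg (by positivity)]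
    nlinarith
  have hlt : ‖v‖ ^ 2 - 6 * t * ‖v‖ + 9 * d * t ^ 2 < (‖v‖ - 2 * t) ^ 2 := by nlinarith
  exact lt_of_pow_lt_pow_left₀ 2 (by nlinarith) (hsq.trans_lt hlt)

theorem dist_lt_dist_of_mem_ball_of_mem_ball {α : Type*} [PseudoMetricSpace α] {z c x u w : α}
    {t : ℝ} (hc : dist z c < dist z x - 2 * t) (hu : u ∈ ball c t) (hw : w ∈ ball x t) :
    dist z u < dist z w := by
  rw [mem_ball] at hu hw
  linarith [dist_triangle z c u, dist_triangle z w x, dist_comm c u]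

theorem nearest_point_geometric_lemma (d : ℕ) (hd : 1 ≤ d)
    (S : Set (EuclideanSpace ℝ (Fin d)))
    (x : EuclideanSpace ℝ (Fin d)) (t : ℝ) (ht : 0 < t)
    (h0 : (S ∩ Metric.ball x t).Nonempty)
    (hplus : ∀ i : Fin d,
      (S ∩ Metric.ball (x + (3 * Real.sqrt d * t) • EuclideanSpace.single i (1 : ℝ)) t).Nonempty)
    (hminus : ∀ i : Fin d,
      (S ∩ Metric.ball (x - (3 * Real.sqrt d * t) • EuclideanSpace.single i (1 : ℝ)) t).Nonempty) :
    (∀ p ∈ S, (∀ w ∈ S, dist p x ≤ dist w x) → dist p x < t) ∧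
    (∀ z : EuclideanSpace ℝ (Fin d), 9 * (d : ℝ) * Real.sqrt d * t < dist z x →
      ∃ u ∈ S, ∀ w ∈ S ∩ Metric.ball x t, dist z u < dist z w) := by
  obtain ⟨q, hqS, hqx⟩ := h0
  refine ⟨fun p _ hmin ↦ (hmin q hqS).trans_lt hqx, fun z hz ↦ ?_⟩
  have : Nonempty (Fin d) := ⟨⟨0, hd⟩⟩
  rw [dist_eq_norm] at hz
  have closer : ∀ e, ‖e‖ = 1 → ‖z - x‖ ≤ √d * ⟪z - x, e⟫ →
      (S ∩ ball (x + (3 * √d * t) • e) t).Nonempty →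
      ∃ u ∈ S, ∀ w ∈ S ∩ ball x t, dist z u < dist z w := by
    rintro e he hve ⟨u, huS, hu⟩
    have hc := norm_sub_smul_lt_of_le_inner he (by exact_mod_cast hd) ht hve hz
    rw [sub_sub, ← dist_eq_norm, ← dist_eq_norm] at hc
    exact ⟨u, huS, fun w hw ↦ dist_lt_dist_of_mem_ball_of_mem_ball hc hu hw.2⟩
  obtain ⟨i, hi⟩ :=
    (EuclideanSpace.basisFun (Fin d) ℝ).exists_norm_le_sqrt_card_mul_abs_inner (z - x)
  rw [Fintype.card_fin, EuclideanSpace.basisFun_apply, real_inner_comm] at hi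
  rcases le_or_gt 0 ⟪z - x, EuclideanSpace.single i 1⟫ with hpos | hneg
  · exact closer _ (by simp) (by rwa [abs_of_nonneg hpos] at hi) (hplus i)
  · refine closer (-EuclideanSpace.single i 1) (by simp) ?_
      (by simpa [sub_eq_add_neg] using hminus i)
    rwa [abs_of_neg hneg, ← inner_neg_right] at hi
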